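/- Let n ≥ 1 be a natural number and let u : [0,∞) → ℝ be twice differentiable with u(r) > 0 for all r ≥ 0, strictly decreasing, satisfying u''(r) + ((n-1)/r) u'(r) + f(u(r)) = 0 for all r > 0, with u'(0) = 0, and such that P(r) = r^n (u'(r)² + 2F(u(r))) + (n-2) r^{n-1} u(r) u'(r) tends to 0 as r → ∞. Let B > 0 satisfy Σ(v) < 0 for all v ∈ (0,B). Then u(0) > B. -/

import Mathlib

/-- The double power nonlinearity `f(u) = -ω u + u^p - u^q`. -/
noncomputable def f (ω p q u : ℝ) : ℝ := -ω * u + u ^ p - u ^ q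

/-- The primitive `F(u) = -(ω/2)u² + u^{p+1}/(p+1) - u^{q+1}/(q+1)`. -/
noncomputable def F (ω p q u : ℝ) : ℝ :=
  -(ω / 2) * u ^ 2 + u ^ (p + 1) / (p + 1) - u ^ (q + 1) / (q + 1)

/-- The Pohozaev polynomial `Σ(u) = 2nF(u) - (n-2)u f(u)`. -/
noncomputable def Sig (n : ℕ) (ω p q u : ℝ) : ℝ :=
  2 * n * F ω p q u - ((n : ℝ) - 2) * u * f ω p q u

/-- The Pohozaev function `P(r) = rⁿ(u'(r)² + 2F(u(r))) + (n-2)r^{n-1}u(r)u'(r)`. -/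
noncomputable def P (n : ℕ) (ω p q : ℝ) (u u' : ℝ → ℝ) (r : ℝ) : ℝ :=
  r ^ (n : ℝ) * ((u' r) ^ 2 + 2 * F ω p q (u r)) +
    ((n : ℝ) - 2) * r ^ ((n : ℝ) - 1) * u r * u' r

/-!
Along a solution the Pohozaev function has derivative `P'(r) = r^{n-1} Σ(u(r))`. If `u(0) ≤ B`,
then `0 < u(r) < B` for every `r > 0`, so `P` is strictly decreasing on `[0, ∞)`; since
`P(0) = 0` (because `u'(0) = 0`), `P` stays below the negative value `P(1)` on `[1, ∞)` and
cannot tend to `0`.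
-/

open Set Filter Topology

lemma lt_of_strictAntiOn_Ici_of_tendsto {g : ℝ → ℝ} {a l : ℝ} (hg : StrictAntiOn g (Ici a))
    (hlim : Tendsto g atTop (𝓝 l)) : l < g a := by
  have hle : l ≤ g (a + 1) :=
    le_of_tendsto hlim <| eventually_gt_atTop (a + 1) |>.mono fun r hr =>
      (hg (by simp) (mem_Ici.2 (by linarith)) hr).le
  exact hle.trans_lt (hg self_mem_Ici (by simp) (by linarith))

section Pohozaev

variable {ω p q : ℝ} {n : ℕ} {u u' u'' : ℝ → ℝ}

lemma hasDerivAt_F (hp : p + 1 ≠ 0) (hq : q + 1 ≠ 0) {v : ℝ} (hv : v ≠ 0) :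
    HasDerivAt (F ω p q) (f ω p q v) v := by
  have hsq := (hasDerivAt_pow 2 v).const_mul (-(ω / 2))
  have hp1 := (Real.hasDerivAt_rpow_const (p := p + 1) (Or.inl hv)).div_const (p + 1)
  have hq1 := (Real.hasDerivAt_rpow_const (p := q + 1) (Or.inl hv)).div_const (q + 1)
  refine ((hsq.add hp1).sub hq1).congr_deriv ?_
  simp only [f, add_sub_cancel_right]
  field_simp
  ring

lemma hasDerivAt_P (hp : p + 1 ≠ 0) (hq : q + 1 ≠ 0) {r : ℝ} (hr : 0 < r)
    (hu : HasDerivAt u (u' r) r) (hu' : HasDerivAt u' (u'' r) r) (hur : u r ≠ 0)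
    (hode : u'' r + ((n : ℝ) - 1) / r * u' r + f ω p q (u r) = 0) :
    HasDerivAt (P n ω p q u u') (r ^ ((n : ℝ) - 1) * Sig n ω p q (u r)) r := by
  have hrn := Real.hasDerivAt_rpow_const (p := (n : ℝ)) (Or.inl hr.ne')
  have hrn1 := Real.hasDerivAt_rpow_const (p := (n : ℝ) - 1) (Or.inl hr.ne')
  have hFu := (hasDerivAt_F (ω := ω) hp hq hur).comp r hu
  have hP := (hrn.mul ((hu'.pow 2).add (hFu.const_mul 2))).add
    (((hrn1.const_mul ((n : ℝ) - 2)).mul hu).mul hu')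
  refine hP.congr_deriv ?_
  have hu''r : u'' r = -(((n : ℝ) - 1) / r * u' r + f ω p q (u r)) := by linarith
  have hrpow : r ^ (n : ℝ) = r ^ ((n : ℝ) - 1) * r := by
    rw [← Real.rpow_add_one hr.ne', sub_add_cancel]
  have hrpow' : r ^ ((n : ℝ) - 1 - 1) = r ^ ((n : ℝ) - 1) / r := by
    rw [Real.rpow_sub_one hr.ne']
  rw [hu''r, hrpow, hrpow']
  simp only [Sig, Function.comp_apply, Pi.add_apply, Pi.mul_apply, Pi.pow_apply]
  field_simp
  ring

lemma continuousAt_P (hp : p + 1 ≠ 0) (hq : q + 1 ≠ 0) (hn : 1 ≤ n) {r : ℝ}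
    (hu : ContinuousAt u r) (hu' : ContinuousAt u' r) (hur : u r ≠ 0) :
    ContinuousAt (P n ω p q u u') r := by
  have hn' : (0 : ℝ) ≤ (n : ℝ) - 1 := sub_nonneg.2 (by exact_mod_cast hn)
  have hrn := Real.continuousAt_rpow_const r (n : ℝ) (Or.inr n.cast_nonneg)
  have hrn1 := Real.continuousAt_rpow_const r ((n : ℝ) - 1) (Or.inr hn')
  have hFu : ContinuousAt (fun s => F ω p q (u s)) r :=
    (hasDerivAt_F hp hq hur).continuousAt.comp hu
  exact (hrn.mul ((hu'.pow 2).add (hFu.const_mul 2))).add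
    (((hrn1.const_mul _).mul hu).mul hu')

lemma P_zero (hn : n ≠ 0) (hu'0 : u' 0 = 0) : P n ω p q u u' 0 = 0 := by
  simp [P, hu'0, Real.zero_rpow (Nat.cast_ne_zero.2 hn)]

lemma strictAntiOn_P (hp : p + 1 ≠ 0) (hq : q + 1 ≠ 0) (hn : 1 ≤ n)
    (hu : ∀ r, 0 ≤ r → HasDerivAt u (u' r) r) (hu' : ∀ r, 0 ≤ r → HasDerivAt u' (u'' r) r)
    (hupos : ∀ r, 0 ≤ r → 0 < u r)
    (hode : ∀ r, 0 < r → u'' r + ((n : ℝ) - 1) / r * u' r + f ω p q (u r) = 0)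
    (hSig : ∀ r, 0 < r → Sig n ω p q (u r) < 0) :
    StrictAntiOn (P n ω p q u u') (Ici 0) := by
  refine strictAntiOn_of_hasDerivWithinAt_neg (convex_Ici 0)
    (f' := fun r => r ^ ((n : ℝ) - 1) * Sig n ω p q (u r))
    (fun r hr => (continuousAt_P hp hq hn (hu r hr).continuousAt (hu' r hr).continuousAt
      (hupos r hr).ne').continuousWithinAt) (fun r hr => ?_) (fun r hr => ?_)
  all_goals rw [interior_Ici] at hr
  · exact (hasDerivAt_P hp hq hr (hu r hr.le) (hu' r hr.le) (hupos r hr.le).ne'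
      (hode r hr)).hasDerivWithinAt
  · exact mul_neg_of_pos_of_neg (Real.rpow_pos_of_pos hr _) (hSig r hr)

end Pohozaev

theorem max_value_gt_B_general (p q ω : ℝ) (hp : 1 < p) (hpq : p < q)
    (n : ℕ) (hn : 1 ≤ n) (u u' u'' : ℝ → ℝ)
    (hu : ∀ r, 0 ≤ r → HasDerivAt u (u' r) r)
    (hu' : ∀ r, 0 ≤ r → HasDerivAt u' (u'' r) r)
    (hupos : ∀ r, 0 ≤ r → 0 < u r)
    (hdec : StrictAntiOn u (Set.Ici (0 : ℝ)))
    (hode : ∀ r, 0 < r → u'' r + ((n : ℝ) - 1) / r * u' r + f ω p q (u r) = 0)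
    (hu'0 : u' 0 = 0)
    (hPlim : Filter.Tendsto (P n ω p q u u') Filter.atTop (nhds 0))
    (B : ℝ)
    (hSig : ∀ v, 0 < v → v < B → Sig n ω p q v < 0) :
    B < u 0 := by
  by_contra! hu0
  have hSig_u : ∀ r, 0 < r → Sig n ω p q (u r) < 0 := fun r hr =>
    hSig _ (hupos r hr.le) ((hdec self_mem_Ici (mem_Ici.2 hr.le) hr).trans_le hu0)
  have hanti := strictAntiOn_P (by linarith) (by linarith) hn hu hu' hupos hode hSig_u
  have hlt := lt_of_strictAntiOn_Ici_of_tendsto hanti hPlim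
  rw [P_zero (by omega) hu'0] at hlt
  exact hlt.false

/-- Theorem 2: if `u` is a positive, strictly decreasing, twice differentiable solution
of `u'' + ((n-1)/r)u' + f(u) = 0` on `(0,∞)` with `u'(0) = 0` and `P(r) → 0` as
`r → ∞`, and `B > 0` satisfies `Σ < 0` on `(0,B)`, then `u(0) > B`. -/
theorem max_value_gt_B (p q ω : ℝ) (hp : 1 < p) (hpq : p < q) (hω : 0 < ω)
    (n : ℕ) (hn : 1 ≤ n) (u u' u'' : ℝ → ℝ)
    (hu : ∀ r, 0 ≤ r → HasDerivAt u (u' r) r)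
    (hu' : ∀ r, 0 ≤ r → HasDerivAt u' (u'' r) r)
    (hupos : ∀ r, 0 ≤ r → 0 < u r)
    (hdec : StrictAntiOn u (Set.Ici (0 : ℝ)))
    (hode : ∀ r, 0 < r → u'' r + ((n : ℝ) - 1) / r * u' r + f ω p q (u r) = 0)
    (hu'0 : u' 0 = 0)
    (hPlim : Filter.Tendsto (P n ω p q u u') Filter.atTop (nhds 0))
    (B : ℝ) (hB : 0 < B)
    (hSig : ∀ v, 0 < v → v < B → Sig n ω p q v < 0) :
    B < u 0 :=
  max_value_gt_B_general p q ω hp hpq n hn u u' u'' hu hu' hupos hdec hode hu'0 hPlim B hSig
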